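/- Let A be a matrix partitioned into blocks B_{k,l} ∈ ℝ^{m_k × n_l} for k in a finite index set K and l in a finite index set L. Define γ_C = max over k of the number of indices l with B_{k,l} ≠ 0, and γ_R = max over l of the number of indices k with B_{k,l} ≠ 0. Then the spectral norm of A satisfies ‖A‖₂ ≤ √(γ_C) · √(γ_R) · max_{k,l} ‖B_{k,l}‖₂. -/

import Mathlib

/-!
Cut `x` and `A x` into blocks, `x = (x_l)` and `(A x)_k = ∑_{l : B k l ≠ 0} B k l x_l`. With
`M = max ‖B k l‖₂`, Cauchy–Schwarz over the at most `γC` nonzero blocks of row `k` gives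
`‖(A x)_k‖² ≤ γC ∑_{l : B k l ≠ 0} M² ‖x_l‖²`, and summing over `k` counts each `‖x_l‖²` at most
`γR` times, so `‖A x‖² ≤ γC γR M² ‖x‖²`.
-/

open Matrix

/-- The spectral norm (operator norm induced by the Euclidean vector norm) of a real
matrix. -/
noncomputable def specNorm {m n : Type*} [Fintype m] [Fintype n] [DecidableEq n]
    (A : Matrix m n ℝ) : ℝ :=
  ‖LinearMap.toContinuousLinearMap (Matrix.toEuclideanLin A)‖

open Finset

section SpecNorm

variable {m n : Type*} [Fintype m] [Fintype n] [DecidableEq n]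

theorem specNorm_nonneg (A : Matrix m n ℝ) : 0 ≤ specNorm A :=
  norm_nonneg _

theorem norm_toEuclideanLin_apply_le (A : Matrix m n ℝ) (x : EuclideanSpace ℝ n) :
    ‖toEuclideanLin A x‖ ≤ specNorm A * ‖x‖ :=
  (LinearMap.toContinuousLinearMap (toEuclideanLin A)).le_opNorm x

theorem specNorm_le_of_forall_norm_apply_le {A : Matrix m n ℝ} {C : ℝ} (hC : 0 ≤ C)
    (h : ∀ x, ‖toEuclideanLin A x‖ ≤ C * ‖x‖) : specNorm A ≤ C :=
  ContinuousLinearMap.opNorm_le_bound _ hC h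

end SpecNorm

theorem sum_sq_sum_filter_le_mul_sum_sq {K L R : Type*} [Fintype K] [Fintype L] [CommRing R] [LinearOrder R]
    [IsStrictOrderedRing R] (r : K → L → Prop) [∀ k, DecidablePred (r k)]
    [∀ l, DecidablePred (r · l)] {p q : ℕ}
    (hrow : ∀ k, #{l | r k l} ≤ p) (hcol : ∀ l, #{k | r k l} ≤ q) (u : L → R) :
    ∑ k, (∑ l with r k l, u l) ^ 2 ≤ p * q * ∑ l, u l ^ 2 := by
  calc ∑ k, (∑ l with r k l, u l) ^ 2
      ≤ ∑ k, (p : R) * ∑ l with r k l, u l ^ 2 := by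
        gcongr with k
        exact sq_sum_le_card_mul_sum_sq.trans (by gcongr; exact_mod_cast hrow k)
    _ = p * ∑ l, (#{k | r k l} : R) * u l ^ 2 := by
        simp only [← mul_sum, sum_filter, card_filter, Nat.cast_sum, Nat.cast_ite, sum_mul]
        rw [sum_comm]
        simp
    _ ≤ p * ∑ l, (q : R) * u l ^ 2 := by
        gcongr with l
        exact_mod_cast hcol l
    _ = p * q * ∑ l, u l ^ 2 := by rw [← mul_sum, mul_assoc]

section Blocks

variable {K L : Type*} [Fintype K] [Fintype L] {α : K → Type*} {β : L → Type*}
  [∀ k, Fintype (α k)] [∀ l, Fintype (β l)]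

variable (α) in
noncomputable abbrev EuclideanSpace.sigmaCurry :
    EuclideanSpace ℝ (Σ k, α k) ≃ₗᵢ[ℝ] PiLp 2 fun k => EuclideanSpace ℝ (α k) :=
  LinearIsometryEquiv.piLpCurry ℝ 2 fun k (_ : α k) => ℝ

theorem EuclideanSpace.norm_sq_eq_sum_sigmaCurry (x : EuclideanSpace ℝ (Σ k, α k)) :
    ‖x‖ ^ 2 = ∑ k, ‖sigmaCurry α x k‖ ^ 2 := by
  rw [← (sigmaCurry α).norm_map x, PiLp.norm_sq_eq_of_L2]

variable [DecidableEq L] [∀ l, DecidableEq (β l)]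

theorem sigmaCurry_toEuclideanLin_apply (A : Matrix (Σ k, α k) (Σ l, β l) ℝ)
    (x : EuclideanSpace ℝ (Σ l, β l)) (k : K) :
    EuclideanSpace.sigmaCurry α (toEuclideanLin A x) k =
      ∑ l, toEuclideanLin (A.submatrix (Sigma.mk k) (Sigma.mk l))
        (EuclideanSpace.sigmaCurry β x l) := by
  ext i
  simp only [LinearIsometryEquiv.piLpCurry_apply, ofLp_toLpLin, toLin'_apply, Sigma.curry, mulVec,
    dotProduct, Fintype.sum_sigma, toLpLin_toLp, WithLp.ofLp_sum, Finset.sum_apply, submatrix_apply]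

theorem specNorm_le_of_blockSparse (A : Matrix (Σ k, α k) (Σ l, β l) ℝ)
    (B : ∀ k l, Matrix (α k) (β l) ℝ) (hB : ∀ k l i j, B k l i j = A ⟨k, i⟩ ⟨l, j⟩) {p q : ℕ}
    (hrow : ∀ k, #{l | B k l ≠ 0} ≤ p) (hcol : ∀ l, #{k | B k l ≠ 0} ≤ q) {M : ℝ} (hM : 0 ≤ M)
    (hblock : ∀ k l, specNorm (B k l) ≤ M) :
    specNorm A ≤ √p * √q * M := by
  refine specNorm_le_of_forall_norm_apply_le (by positivity) fun x => ?_
  set xb := EuclideanSpace.sigmaCurry β x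
  have hblockRow : ∀ k, ‖EuclideanSpace.sigmaCurry α (toEuclideanLin A x) k‖ ≤
      ∑ l with B k l ≠ 0, M * ‖xb l‖ := by
    intro k
    have hsubmatrix : ∀ l, A.submatrix (Sigma.mk k) (Sigma.mk l) = B k l := fun l =>
      Matrix.ext fun i j => (hB k l i j).symm
    rw [sigmaCurry_toEuclideanLin_apply, ← sum_filter_of_ne (p := fun l => B k l ≠ 0)
      fun l _ h hzero => h (by simp [hsubmatrix, hzero])]
    refine (norm_sum_le _ _).trans (sum_le_sum fun l _ => ?_)
    rw [hsubmatrix]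
    exact (norm_toEuclideanLin_apply_le _ _).trans (by gcongr; exact hblock k l)
  refine le_of_pow_le_pow_left₀ two_ne_zero (by positivity) ?_
  calc ‖toEuclideanLin A x‖ ^ 2
      = ∑ k, ‖EuclideanSpace.sigmaCurry α (toEuclideanLin A x) k‖ ^ 2 :=
        EuclideanSpace.norm_sq_eq_sum_sigmaCurry _
    _ ≤ ∑ k, (∑ l with B k l ≠ 0, M * ‖xb l‖) ^ 2 := by
        gcongr with k
        exact hblockRow k
    _ ≤ p * q * ∑ l, (M * ‖xb l‖) ^ 2 := sum_sq_sum_filter_le_mul_sum_sq _ hrow hcol _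
    _ = (√p * √q * M * ‖x‖) ^ 2 := by
        simp only [mul_pow, ← mul_sum, EuclideanSpace.norm_sq_eq_sum_sigmaCurry x,
          Real.sq_sqrt (Nat.cast_nonneg _)]
        ring

end Blocks

theorem blockSparse_specNorm_bound_general
    {K L : Type*} [Fintype K] [Fintype L]
    [DecidableEq L]
    (m : K → ℕ) (n : L → ℕ)
    (A : Matrix ((k : K) × Fin (m k)) ((l : L) × Fin (n l)) ℝ)
    (B : ∀ k l, Matrix (Fin (m k)) (Fin (n l)) ℝ)
    (hB : ∀ (k : K) (l : L) (i : Fin (m k)) (j : Fin (n l)), B k l i j = A ⟨k, i⟩ ⟨l, j⟩)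
    (γC γR : ℕ)
    (hγC : γC = Finset.univ.sup fun k => (Finset.univ.filter fun l => B k l ≠ 0).card)
    (hγR : γR = Finset.univ.sup fun l => (Finset.univ.filter fun k => B k l ≠ 0).card) :
    specNorm A ≤ Real.sqrt γC * Real.sqrt γR * ⨆ k, ⨆ l, specNorm (B k l) := by
  refine specNorm_le_of_blockSparse A B hB
    (fun k => hγC ▸ le_sup (f := fun k => #{l | B k l ≠ 0}) (mem_univ k))
    (fun l => hγR ▸ le_sup (f := fun l => #{k | B k l ≠ 0}) (mem_univ l))
    (Real.iSup_nonneg fun k => Real.iSup_nonneg fun l => specNorm_nonneg _) fun k l => ?_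
  exact (le_ciSup (Set.finite_range _).bddAbove l).trans
    (le_ciSup (f := fun k => ⨆ l, specNorm (B k l)) (Set.finite_range _).bddAbove k)

/-- If `A` is partitioned into blocks `B k l ∈ ℝ^{m k × n l}`, and
`γC` (resp. `γR`) is the maximal number of nonzero blocks in a block row (resp. block
column), then `‖A‖₂ ≤ √γC · √γR · max_{k,l} ‖B k l‖₂`. -/
theorem blockSparse_specNorm_bound
    {K L : Type*} [Fintype K] [Fintype L] [Nonempty K] [Nonempty L]
    [DecidableEq K] [DecidableEq L]
    (m : K → ℕ) (n : L → ℕ)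
    (A : Matrix ((k : K) × Fin (m k)) ((l : L) × Fin (n l)) ℝ)
    (B : ∀ k l, Matrix (Fin (m k)) (Fin (n l)) ℝ)
    (hB : ∀ (k : K) (l : L) (i : Fin (m k)) (j : Fin (n l)), B k l i j = A ⟨k, i⟩ ⟨l, j⟩)
    (γC γR : ℕ)
    (hγC : γC = Finset.univ.sup fun k => (Finset.univ.filter fun l => B k l ≠ 0).card)
    (hγR : γR = Finset.univ.sup fun l => (Finset.univ.filter fun k => B k l ≠ 0).card) :
    specNorm A ≤ Real.sqrt γC * Real.sqrt γR * ⨆ k, ⨆ l, specNorm (B k l) :=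
  blockSparse_specNorm_bound_general m n A B hB γC γR hγC hγR
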